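/- arXiv:2106.13879 — 2 statements merged into one kernel-verified Lean document; each statement's English description precedes it below -/
import Mathlib

section
/- Let p̃(m,s) = (t−1)·m − C(s+t,t−1) + 1 with t the repetition number for (m,s). Then p̃(m,s) = 0 if and only if m ≤ s + 1 (i.e., when memory is sufficient, the modified schedule requires no recomputation). -/
/-- The repetition number: the least `t` with `m ≤ C(s+t, t)`. -/
noncomputable def tRep (m s : ℕ) : ℕ := sInf {t : ℕ | m ≤ (s + t).choose t}

/-- `p(m,s) = t·m − C(s+t, t−1)` with the convention `C(s,−1) = 0`. -/
noncomputable def pRev (m s : ℕ) : ℤ :=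
  (tRep m s : ℤ) * m -
    (if tRep m s = 0 then 0 else ((s + tRep m s).choose (tRep m s - 1) : ℤ))

/-- `p̃(m,s) = (t−1)·m − C(s+t, t−1) + 1` with the convention `C(s,−1) = 0`. -/
noncomputable def pMod (m s : ℕ) : ℤ :=
  ((tRep m s : ℤ) - 1) * m -
    (if tRep m s = 0 then 0 else ((s + tRep m s).choose (tRep m s - 1) : ℤ)) + 1

lemma tRep_nonempty (m s : ℕ) (hs : 1 ≤ s) :
    {t : ℕ | m ≤ (s + t).choose t}.Nonempty := by
  refine ⟨m, ?_⟩
  have h1 : (m + 1).choose m = m + 1 := by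
    have := Nat.choose_symm (n := m + 1) (k := m) (by omega)
    simpa [Nat.choose_one_right] using this.symm
  have h2 : (m + 1).choose m ≤ (s + m).choose m :=
    Nat.choose_le_choose m (by omega)
  simp only [Set.mem_setOf_eq]
  omega

lemma tRep_mem (m s : ℕ) (hs : 1 ≤ s) :
    m ≤ (s + tRep m s).choose (tRep m s) :=
  Nat.sInf_mem (tRep_nonempty m s hs)

lemma tRep_lt (m s t' : ℕ) (h : t' < tRep m s) :
    (s + t').choose t' < m := by
  have := Nat.notMem_of_lt_sInf h
  simp only [Set.mem_setOf_eq, not_le] at this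
  exact this

/-- key inequality for the case `m ≥ s+2`. -/
lemma key_ineq (s u m : ℕ) (hs : 1 ≤ s) (hu : 1 ≤ u)
    (hm : (s + u).choose u < m) : (s + u + 1).choose u ≤ u * m := by
  set C := (s + u).choose u with hC
  set D := (s + u).choose (u - 1) with hD
  have pascal : (s + u + 1).choose u = D + C := by
    have hu' : u = (u - 1) + 1 := by omega
    rw [hu']
    have h := Nat.choose_succ_succ (s + u) (u - 1)
    rw [show s + ((u - 1) + 1) + 1 = (s + u) + 1 by omega, h, hD, hC]
    congr 2
    omega
  have id1 : C * u = D * (s + 1) := by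
    have h := Nat.choose_succ_right_eq (s + u) (u - 1)
    rw [show (u - 1) + 1 = u by omega, show s + u - (u - 1) = s + 1 by omega] at h
    rw [hC, hD]
    exact h
  rcases Nat.lt_or_ge u 2 with h2 | h2
  · -- u = 1
    have hu1 : u = 1 := by omega
    subst hu1
    have hD1 : D = 1 := by simp [hD]
    have hC1 : C = s + 1 := by simp [hC, Nat.choose_one_right]
    rw [pascal]
    omega
  · -- u ≥ 2
    have h2D : 2 * D ≤ u * C := by nlinarith
    have hD' : D ≤ (u - 1) * C := by
      have hC0 : 0 < C := by
        rw [hC]; exact Nat.choose_pos (by omega)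
      have huu : u ≤ 2 * (u - 1) := by omega
      have : 2 * D ≤ 2 * ((u - 1) * C) := by
        calc 2 * D ≤ u * C := h2D
          _ ≤ (2 * (u - 1)) * C := Nat.mul_le_mul_right C huu
          _ = 2 * ((u - 1) * C) := by ring
      omega
    rw [pascal]
    calc D + C ≤ (u - 1) * C + C := by omega
      _ = u * C := by
          have : (u - 1) * C + C = ((u - 1) + 1) * C := by ring
          rw [this, show (u - 1) + 1 = u by omega]
      _ ≤ u * m := Nat.mul_le_mul_left u (by omega)

/-- `p̃(m,s) = 0` if and only if `m ≤ s + 1`. -/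
theorem stmt4 (m s : ℕ) (hm : 1 ≤ m) (hs : 1 ≤ s) :
    pMod m s = 0 ↔ m ≤ s + 1 := by
  constructor
  · intro h
    by_contra hms
    push_neg at hms
    have ht2 : 2 ≤ tRep m s := by
      by_contra hlt
      push_neg at hlt
      interval_cases htr : tRep m s
      · have := tRep_mem m s hs; rw [htr] at this; simp at this; omega
      · have := tRep_mem m s hs; rw [htr, Nat.choose_one_right] at this; omega
    set t := tRep m s with htdef
    have hlt : (s + (t - 1)).choose (t - 1) < m := tRep_lt m s (t - 1) (by omega)
    have hkey : (s + (t - 1) + 1).choose (t - 1) ≤ (t - 1) * m :=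
      key_ineq s (t - 1) m hs (by omega) hlt
    rw [show s + (t - 1) + 1 = s + t by omega] at hkey
    have htne : t ≠ 0 := by omega
    unfold pMod at h
    rw [← htdef, if_neg htne] at h
    have hcast : ((t : ℤ) - 1) * m = ((t - 1 : ℕ) : ℤ) * m := by
      push_cast [Nat.cast_sub (by omega : 1 ≤ t)]; ring
    rw [hcast] at h
    have heq : ((t - 1 : ℕ) : ℤ) * (m : ℤ) + 1 = ((s + t).choose (t - 1) : ℤ) := by linarith
    have hnat : (t - 1) * m + 1 = (s + t).choose (t - 1) := by exact_mod_cast heq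
    omega
  · intro h
    rcases Nat.eq_or_lt_of_le hm with h1 | h1
    · -- m = 1, tRep = 0
      have ht : tRep m s = 0 := by
        have h0 : 0 ∈ {t : ℕ | m ≤ (s + t).choose t} := by
          simp only [Set.mem_setOf_eq, Nat.add_zero, Nat.choose_zero_right]
          omega
        exact Nat.sInf_eq_zero.mpr (Or.inl h0)
      unfold pMod
      rw [ht]
      simp
      omega
    · -- 2 ≤ m ≤ s+1, tRep = 1
      have ht : tRep m s = 1 := by
        have h1mem : 1 ∈ {t : ℕ | m ≤ (s + t).choose t} := by
          simp only [Set.mem_setOf_eq, Nat.choose_one_right]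
          omega
        have hle : tRep m s ≤ 1 := Nat.sInf_le h1mem
        have hne : tRep m s ≠ 0 := by
          intro h0
          have := tRep_mem m s hs
          rw [h0] at this
          simp at this
          omega
        omega
      unfold pMod
      rw [ht]
      simp
end

section
/- For fixed m ≥ 1, the function s ↦ p(m,s) = t(m,s)·m − C(s+t(m,s), t(m,s)−1) is nonincreasing in s, and p(m,s) = m − 1 for all s ≥ m − 1. -/
private def hFun (m s τ : ℕ) : ℤ := (τ : ℤ) * m - ((s + τ).choose (τ - 1) : ℤ)

private lemma tRep_one (s : ℕ) : tRep 1 s = 0 := by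
  have : (0 : ℕ) ∈ {t : ℕ | 1 ≤ (s + t).choose t} := by
    simp [Nat.one_le_iff_ne_zero]
  exact Nat.sInf_eq_zero.mpr (Or.inl this)

private lemma tRep_spec (m s : ℕ) (hm : 2 ≤ m) (hs : 1 ≤ s) :
    m ≤ (s + tRep m s).choose (tRep m s) ∧
    (∀ τ < tRep m s, (s + τ).choose τ < m) ∧ 1 ≤ tRep m s := by
  have hne : (m - 1) ∈ {t : ℕ | m ≤ (s + t).choose t} := by
    simp only [Set.mem_setOf_eq]
    have h1 : m.choose (m - 1) = m := by
      have := Nat.choose_symm (n := m) (k := 1) (by omega)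
      simpa using this
    calc m = m.choose (m - 1) := h1.symm
      _ ≤ (s + (m - 1)).choose (m - 1) := Nat.choose_le_choose _ (by omega)
  have hmem : tRep m s ∈ {t : ℕ | m ≤ (s + t).choose t} := Nat.sInf_mem ⟨m - 1, hne⟩
  refine ⟨hmem, ?_, ?_⟩
  · intro τ hτ
    have := Nat.notMem_of_lt_sInf hτ
    simp only [Set.mem_setOf_eq, not_le] at this
    exact this
  · by_contra h
    have h0 : tRep m s = 0 := by omega
    rw [h0] at hmem
    simp at hmem
    omega

private lemma hFun_mono (m s t : ℕ) (hmin : ∀ τ < t, (s + τ).choose τ < m) :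
    ∀ a b : ℕ, 1 ≤ a → a ≤ b → b ≤ t → hFun m s a ≤ hFun m s b := by
  intro a b ha hab hbt
  induction b with
  | zero => omega
  | succ k ih =>
    rcases Nat.lt_or_ge a (k + 1) with h | h
    · have hk : 1 ≤ k := by omega
      refine (ih (by omega) (by omega)).trans ?_
      have hlt : (s + k).choose k < m := hmin k (by omega)
      obtain ⟨j, rfl⟩ : ∃ j, k = j + 1 := ⟨k - 1, by omega⟩
      have hp : (s + (j + 1) + 1).choose (j + 1) =
          (s + (j + 1)).choose j + (s + (j + 1)).choose (j + 1) := by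
        rw [Nat.choose_succ_succ]
      simp only [hFun, Nat.add_sub_cancel]
      have : s + (j + 1 + 1) = s + (j + 1) + 1 := by ring
      rw [this, hp]
      push_cast
      have : ((s + (j + 1)).choose (j + 1) : ℤ) < m := by exact_mod_cast hlt
      linarith
    · have : a = k + 1 := by omega
      subst this
      exact le_rfl

private lemma pRev_eq_hFun (m s : ℕ) (hm : 2 ≤ m) (hs : 1 ≤ s) :
    pRev m s = hFun m s (tRep m s) := by
  have h := (tRep_spec m s hm hs).2.2
  unfold pRev hFun
  rw [if_neg (by omega)]

private lemma pRev_step (m s : ℕ) (hm : 2 ≤ m) (hs : 1 ≤ s) :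
    pRev m (s + 1) ≤ pRev m s := by
  obtain ⟨hmem, hmin, ht1⟩ := tRep_spec m s hm hs
  obtain ⟨hmem', hmin', ht1'⟩ := tRep_spec m (s + 1) hm (by omega)
  set t := tRep m s with htdef
  set t' := tRep m (s + 1) with ht'def
  have hle : t' ≤ t := by
    apply Nat.sInf_le
    simp only [Set.mem_setOf_eq]
    exact hmem.trans (Nat.choose_le_choose _ (by omega))
  rw [pRev_eq_hFun m (s+1) hm (by omega), pRev_eq_hFun m s hm hs]
  have h1 : hFun m (s + 1) t' ≤ hFun m s t' := by
    unfold hFun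
    have : ((s + t').choose (t' - 1) : ℤ) ≤ ((s + 1 + t').choose (t' - 1) : ℤ) := by
      exact_mod_cast Nat.choose_le_choose _ (by omega)
    linarith
  exact h1.trans (hFun_mono m s t hmin t' t ht1' hle le_rfl)

/-- For fixed `m ≥ 1`, `s ↦ p(m,s)` is nonincreasing in `s`, and `p(m,s) = m − 1`
for all `s ≥ m − 1`. -/
theorem stmt14 (m : ℕ) (hm : 1 ≤ m) :
    (∀ s₁ s₂ : ℕ, 1 ≤ s₁ → s₁ ≤ s₂ → pRev m s₂ ≤ pRev m s₁) ∧
    (∀ s : ℕ, m - 1 ≤ s → pRev m s = (m : ℤ) - 1) := by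
  rcases Nat.lt_or_ge m 2 with h1 | h2
  · have hm1 : m = 1 := by omega
    subst hm1
    constructor
    · intro s₁ s₂ _ _
      simp [pRev, tRep_one]
    · intro s _
      simp [pRev, tRep_one]
  · constructor
    · intro s₁ s₂ hs₁ hle
      induction s₂, hle using Nat.le_induction with
      | base => exact le_rfl
      | succ n hn ih => exact (pRev_step m n h2 (by omega)).trans ih
    · intro s hs
      have hs1 : 1 ≤ s := by omega
      have ht : tRep m s = 1 := by
        have h1mem : (1 : ℕ) ∈ {t : ℕ | m ≤ (s + t).choose t} := by
          simp only [Set.mem_setOf_eq, Nat.choose_one_right]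
          omega
        have hle1 : tRep m s ≤ 1 := Nat.sInf_le h1mem
        have := (tRep_spec m s h2 hs1).2.2
        omega
      unfold pRev
      rw [ht]
      simp
end
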